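/- arXiv:2111.12003 — 2 statements merged into one kernel-verified Lean document; each statement's English description precedes it below -/
import Mathlib

section
/- A totally umbilical hypersurface M^m in an Einstein space N^{m+1} with non-positive scalar curvature is p-biharmonic if and only if it is minimal (its mean curvature function vanishes identically), assuming M is connected. -/
/-!
The gradient equation reads `(2 + 2(p - 2 + m/2)) • (f • grad f) = 0`, so `grad (f²) = 2 f • grad f`
vanishes and `f²` is constant on the connected manifold `M`. By the intermediate value theorem a
continuous function with constant square cannot change sign, so `f` itself is constant and `Δf = 0`.
The Laplacian equation then becomes `f (m (p - 1) f² - S / (m + 1)) = 0`, whose second factor is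
positive unless `f = 0`, because `S ≤ 0`.
-/

theorem eq_of_sq_eq_of_continuous {X : Type*} [TopologicalSpace X] [PreconnectedSpace X]
    {f : X → ℝ} (hf : Continuous f) (hsq : ∀ x y, f x ^ 2 = f y ^ 2) (x y : X) :
    f x = f y := by
  rcases sq_eq_sq_iff_eq_or_eq_neg.mp (hsq x y) with h | h
  · exact h
  obtain ⟨z, hz⟩ : ∃ z, f z = 0 := by
    rcases le_total 0 (f y) with hy | hy
    · exact intermediate_value_univ x y hf ⟨by linarith, hy⟩
    · exact intermediate_value_univ y x hf ⟨hy, by linarith⟩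
  have hy : f y = 0 := by simpa [hz] using hsq y z
  rw [h, hy, neg_zero]

theorem smul_eq_zero_of_two_smul_add_smul_two_mul_smul {E : Type*} [AddCommGroup E]
    [Module ℝ E] {a k : ℝ} {v : E} (hk : k ≠ -1)
    (h : (2 : ℝ) • (a • v) + k • ((2 * a) • v) = 0) : a • v = 0 := by
  have hcoef : (2 * (1 + k)) • (a • v) = 0 := by
    rw [← h, mul_smul 2 a v, smul_smul k, ← add_smul]
    congr 1
    ring
  exact (smul_eq_zero.mp hcoef).resolve_left fun h0 => hk (by linarith)

theorem eq_zero_of_umbilical_tension_eq_zero {m p S c : ℝ} (hm : 0 < m) (hp : 1 < p)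
    (hS : S ≤ 0) (h : c * (m * c ^ 2) + m * (p - 2) * c ^ 3 - S * c / (m + 1) = 0) :
    c = 0 := by
  have hfactor : c * (m * (p - 1) * c ^ 2 - S / (m + 1)) = 0 := by
    rw [← h]
    ring
  by_contra! hc
  have hpos : 0 < m * (p - 1) * c ^ 2 - S / (m + 1) := by
    have hS' : S / (m + 1) ≤ 0 := div_nonpos_of_nonpos_of_nonneg hS (by linarith)
    have hc2 : 0 < c ^ 2 := by positivity
    have : 0 < m * (p - 1) * c ^ 2 := mul_pos (mul_pos hm (by linarith)) hc2
    linarith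
  exact (mul_ne_zero hc hpos.ne') hfactor

theorem stmt_3_general {M : Type*} [TopologicalSpace M] [ConnectedSpace M]
    {E : Type*} [AddCommGroup E] [Module ℝ E]
    (m : ℕ) (hm : 1 ≤ m) (p S : ℝ) (hp : 2 ≤ p) (hS : S ≤ 0)
    (f : M → ℝ) (hf : Continuous f)
    (lap : (M → ℝ) → M → ℝ) (grad : (M → ℝ) → M → E)
    (hlapconst : ∀ c : ℝ, lap (fun _ => c) = fun _ => 0)
    (hgradsq : ∀ x, grad (fun y => (f y) ^ 2) x = (2 * f x) • grad f x)
    (hgradzero : ∀ u : M → ℝ, Continuous u → (∀ x, grad u x = 0) → ∀ x y, u x = u y) :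
    ((∀ x, -(lap f x) + f x * ((m : ℝ) * (f x) ^ 2) + (m : ℝ) * (p - 2) * (f x) ^ 3
        - S * f x / ((m : ℝ) + 1) = 0) ∧
     (∀ x, (2 : ℝ) • (f x • grad f x)
        + (p - 2 + (m : ℝ) / 2) • grad (fun y => (f y) ^ 2) x = 0))
    ↔ ∀ x, f x = 0 := by
  have hm' : (1 : ℝ) ≤ m := by exact_mod_cast hm
  constructor
  · rintro ⟨hlap, hgrad⟩ x
    have hfgrad : ∀ x, f x • grad f x = 0 := fun x =>
      smul_eq_zero_of_two_smul_add_smul_two_mul_smul (by linarith) (hgradsq x ▸ hgrad x)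
    have hsq : ∀ x y, f x ^ 2 = f y ^ 2 := hgradzero _ (hf.pow 2) fun x => by
      rw [hgradsq, mul_smul, hfgrad, smul_zero]
    have hconst : f = fun _ => f x := funext fun y => eq_of_sq_eq_of_continuous hf hsq y x
    have hlapx := hlap x
    rw [hconst, hlapconst, neg_zero, zero_add] at hlapx
    exact eq_zero_of_umbilical_tension_eq_zero (by linarith) (by linarith) hS hlapx
  · intro hzero
    have hconst : f = fun _ => 0 := funext hzero
    refine ⟨fun x => ?_, fun x => ?_⟩
    · simp [hconst, hlapconst]
    · rw [hgradsq, hzero]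
      simp

/-- A connected totally umbilical hypersurface `M^m` in an Einstein space
`N^{m+1}` with non-positive scalar curvature `S` is `p`-biharmonic if and only if it is
minimal, i.e. its mean curvature function `f` vanishes identically.

For a totally umbilical hypersurface, `|A|² = m f²` and `A(grad f) = f • grad f`, so the
`p`-biharmonic system from Corollary 1 of the paper reads
`-Δf + f·(m f²) + m(p-2)f³ - S f/(m+1) = 0` and
`2 (f • grad f) + (p-2+m/2) • grad(f²) = 0`.
The Laplacian `lap` and gradient `grad` operators are abstract, subject to the standard
properties they enjoy on a connected Riemannian manifold. -/
theorem stmt_3 {M : Type*} [TopologicalSpace M] [ConnectedSpace M]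
    {E : Type*} [AddCommGroup E] [Module ℝ E]
    (m : ℕ) (hm : 1 ≤ m) (p S : ℝ) (hp : 2 ≤ p) (hS : S ≤ 0)
    (f : M → ℝ) (hf : Continuous f)
    (lap : (M → ℝ) → M → ℝ) (grad : (M → ℝ) → M → E)
    (hlapconst : ∀ c : ℝ, lap (fun _ => c) = fun _ => 0)
    (hgradconst : ∀ c : ℝ, grad (fun _ => c) = fun _ => 0)
    (hgradsq : ∀ x, grad (fun y => (f y) ^ 2) x = (2 * f x) • grad f x)
    (hgradzero : ∀ u : M → ℝ, Continuous u → (∀ x, grad u x = 0) → ∀ x y, u x = u y) :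
    ((∀ x, -(lap f x) + f x * ((m : ℝ) * (f x) ^ 2) + (m : ℝ) * (p - 2) * (f x) ^ 3
        - S * f x / ((m : ℝ) + 1) = 0) ∧
     (∀ x, (2 : ℝ) • (f x • grad f x)
        + (p - 2 + (m : ℝ) / 2) • grad (fun y => (f y) ^ 2) x = 0))
    ↔ ∀ x, f x = 0 :=
  stmt_3_general m hm p S hp hS f hf lap grad hlapconst hgradsq hgradzero
end

section
/- Let M be the horizontal plane {z = c}, c > 0, in the upper half space, viewed as a surface in hyperbolic-type space (ℝ³₊, z^{2/(p−1)}(dx²+dy²+dz²)) for p ≥ 2. Then M, which is minimal in the Euclidean metric with constant conformal data γ(z) = (1/(p−1))ln z, satisfies the p-biharmonic condition: (1−p)γ'(c)² − γ''(c) = 0 and |A|² = 0 = m(1−p)η(γ)² − m η(η(γ)) with m = 2, i.e., the plane is proper p-biharmonic. -/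
/-- The horizontal plane `{z = c}`, `c > 0`, with `γ(z) = ln z/(p−1)` and
`p ≥ 2`, satisfies the `p`-biharmonic criterion `(1−p)γ'(c)² − γ''(c) = 0`, the
condition `|A|² = 0 = m(1−p)η(γ)² − m·η(η(γ))` with `m = 2`, and is proper:
`γ'(c) ≠ 0`. -/
theorem stmt_14 (p c : ℝ) (hp : 2 ≤ p) (hc : 0 < c)
    (γ : ℝ → ℝ) (hγ : ∀ z, γ z = Real.log z / (p - 1)) :
    ((1 - p) * (deriv γ c) ^ 2 - deriv (deriv γ) c = 0) ∧
    ((0 : ℝ) = 2 * (1 - p) * (deriv γ c) ^ 2 - 2 * deriv (deriv γ) c) ∧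
    deriv γ c ≠ 0 := by
  have hpne : p - 1 ≠ 0 := by nlinarith
  have hγe : γ = fun z => Real.log z / (p - 1) := funext hγ
  subst hγe
  have h1 : deriv (fun z => Real.log z / (p - 1)) = fun z => z⁻¹ / (p - 1) := by
    funext z
    rw [deriv_div_const, Real.deriv_log]
  have h2 : deriv (fun z : ℝ => z⁻¹ / (p - 1)) c = -(c ^ 2)⁻¹ / (p - 1) := by
    rw [deriv_div_const, deriv_inv]
  rw [h1, h2]
  have hcne : c ≠ 0 := hc.ne'
  refine ⟨?_, ?_, ?_⟩
  · field_simp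
    ring
  · field_simp
    ring
  · exact div_ne_zero (inv_ne_zero hcne) hpne
end
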